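/- Let D be a finite DAG with vertices partitioned into sources S, internal vertices I, and sinks T, and let σ be any total elimination sequence. For every internal vertex k, the cost paid when k is eliminated (its Markowitz degree at that moment) is at least c(S,k) · c(k,T), where c(S,k) is the minimum size of a vertex set not containing k whose removal disconnects all directed paths from S to k, and c(k,T) is defined symmetrically for paths from k to T. -/

import Mathlib

variable {V : Type*} [DecidableEq V] [Fintype V]

/-- In-neighborhood of `v` in the edge set `E`. -/
def inN (E : Finset (V × V)) (v : V) : Finset V :=
  (E.filter fun p => p.2 = v).image Prod.fst

/-- Out-neighborhood of `v` in the edge set `E`. -/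
def outN (E : Finset (V × V)) (v : V) : Finset V :=
  (E.filter fun p => p.1 = v).image Prod.snd

/-- Elimination of vertex `v`: delete `v` and add an edge from every in-neighbor
to every out-neighbor of `v` (if not already present). -/
def elimv (E : Finset (V × V)) (v : V) : Finset (V × V) :=
  (E ∪ (inN E v) ×ˢ (outN E v)).filter fun p => p.1 ≠ v ∧ p.2 ≠ v

/-- Eliminate a sequence of vertices, in order. -/
def elimSeq (E : Finset (V × V)) (σ : List V) : Finset (V × V) :=
  σ.foldl elimv E

/-- Markowitz degree of `v`: in-degree times out-degree. -/
def mark (E : Finset (V × V)) (v : V) : ℕ :=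
  (inN E v).card * (outN E v).card

/-- Cost of an elimination sequence: sum of the Markowitz degrees at the
time of each elimination. -/
def cost (E : Finset (V × V)) : List V → ℕ
  | [] => 0
  | v :: σ => mark E v + cost (elimv E v) σ

/-- The directed graph with edge set `E` is acyclic. -/
def Acyclic (E : Finset (V × V)) : Prop :=
  ∀ v : V, ¬ Relation.TransGen (fun a b => (a, b) ∈ E) v v

/-- `E` is an acyclic digraph whose vertices are partitioned into sources `S`
(no in-edges), internal vertices `I`, and sinks `T` (no out-edges). -/
def IsDAGPartition (E : Finset (V × V)) (S I T : Finset V) : Prop :=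
  Acyclic E ∧ Disjoint S I ∧ Disjoint S T ∧ Disjoint I T ∧
    S ∪ I ∪ T = Finset.univ ∧ (∀ s ∈ S, inN E s = ∅) ∧ (∀ t ∈ T, outN E t = ∅)

/-- There is a directed path from `i` to `j` all of whose internal vertices
lie in `X` (the single-edge path has no internal vertices). -/
def PathThrough (E : Finset (V × V)) (X : Finset V) (i j : V) : Prop :=
  ∃ l : List V, (∀ v ∈ l, v ∈ X) ∧ List.Chain' (fun a b => (a, b) ∈ E) (i :: (l ++ [j]))

/-- A directed path from `i` to `j` whose internal vertices are `l`. -/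
def IsPath (E : Finset (V × V)) (i j : V) (l : List V) : Prop :=
  List.Chain' (fun a b => (a, b) ∈ E) (i :: (l ++ [j]))

/-- `C` is a vertex set not containing `k` meeting every directed path from
`S` to `k`. -/
def SepStoK (E : Finset (V × V)) (S : Finset V) (k : V) (C : Finset V) : Prop :=
  k ∉ C ∧ ∀ s ∈ S, ∀ l : List V, IsPath E s k l → s ∈ C ∨ ∃ v ∈ l, v ∈ C

/-- `C` is a vertex set not containing `k` meeting every directed path from
`k` to `T`. -/
def SepKtoT (E : Finset (V × V)) (T : Finset V) (k : V) (C : Finset V) : Prop :=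
  k ∉ C ∧ ∀ t ∈ T, ∀ l : List V, IsPath E k t l → t ∈ C ∨ ∃ v ∈ l, v ∈ C

/-- Minimum size of a vertex set separating `S` from `k`. -/
noncomputable def cStoK (E : Finset (V × V)) (S : Finset V) (k : V) : ℕ :=
  sInf {n : ℕ | ∃ C : Finset V, SepStoK E S k C ∧ C.card = n}

/-- Minimum size of a vertex set separating `k` from `T`. -/
noncomputable def cKtoT (E : Finset (V × V)) (T : Finset V) (k : V) : ℕ :=
  sInf {n : ℕ | ∃ C : Finset V, SepKtoT E T k C ∧ C.card = n}

/-! Eliminating vertices preserves reachability among the survivors: if neither `a` nor `b` is in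
`σ` and some path from `a` to `b` has all its internal vertices in `σ`, then `(a, b)` is an edge
of `elimSeq E σ`. On a path from a source to `k`, the last vertex not eliminated before `k` is
therefore an in-neighbour of `k` at the time `k` is eliminated, so that in-neighbourhood separates
`S` from `k`; symmetrically the out-neighbourhood separates `k` from `T`. Minimality of the
separator sizes bounds the two factors of the Markowitz degree. -/

open Relation

section Paths

variable {α : Type*} {E : Finset (α × α)} {a b v : α} {l : List α}

theorem List.exists_split_at_first_of_not_forall {p : α → Prop} (h : ¬ ∀ x ∈ l, p x) :
    ∃ l₁ u l₂, l = l₁ ++ u :: l₂ ∧ (∀ x ∈ l₁, p x) ∧ ¬ p u := by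
  classical
  have hsome : (l.find? fun x => ¬ p x).isSome := List.find?_isSome.2 (by simpa using h)
  obtain ⟨u, hu⟩ := Option.isSome_iff_exists.1 hsome
  obtain ⟨hpu, l₁, l₂, rfl, hl₁⟩ := List.find?_eq_some_iff_append.1 hu
  exact ⟨l₁, u, l₂, rfl, by simpa using hl₁, by simpa using hpu⟩

theorem List.exists_split_at_last_of_not_forall {p : α → Prop} (h : ¬ ∀ x ∈ l, p x) :
    ∃ l₁ u l₂, l = l₁ ++ u :: l₂ ∧ ¬ p u ∧ ∀ x ∈ l₂, p x := by
  obtain ⟨l₁, u, l₂, hl, hl₁, hu⟩ :=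
    List.exists_split_at_first_of_not_forall (l := l.reverse) (by simpa using h)
  refine ⟨l₂.reverse, u, l₁.reverse, ?_, hu, by simpa using hl₁⟩
  simpa using congrArg List.reverse hl

theorem isPath_nil : IsPath E a b [] ↔ (a, b) ∈ E := List.isChain_pair

theorem isPath_cons {x : α} : IsPath E a b (x :: l) ↔ (a, x) ∈ E ∧ IsPath E x b l :=
  List.isChain_cons_cons

theorem isPath_append_cons {l₁ l₂ : List α} :
    IsPath E a b (l₁ ++ v :: l₂) ↔ IsPath E a v l₁ ∧ IsPath E v b l₂ := by
  simp only [IsPath, List.append_assoc, List.cons_append]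
  exact List.isChain_cons_split

theorem IsPath.transGen (h : IsPath E a b l) : TransGen (fun x y => (x, y) ∈ E) a b := by
  induction l generalizing a with
  | nil => exact .single (isPath_nil.1 h)
  | cons x l ih => exact .head (isPath_cons.1 h).1 (ih (isPath_cons.1 h).2)

theorem Acyclic.irrefl (hE : Acyclic E) (a : α) : (a, a) ∉ E :=
  fun h => hE a (.single h)

theorem Acyclic.left_notMem_of_isPath (hE : Acyclic E) (h : IsPath E a b l) : a ∉ l := by
  intro ha
  obtain ⟨l₁, l₂, rfl⟩ := List.append_of_mem ha
  exact hE a (isPath_append_cons.1 h).1.transGen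

theorem Acyclic.right_notMem_of_isPath (hE : Acyclic E) (h : IsPath E a b l) : b ∉ l := by
  intro hb
  obtain ⟨l₁, l₂, rfl⟩ := List.append_of_mem hb
  exact hE b (isPath_append_cons.1 h).2.transGen

theorem cStoK_le_card {S C : Finset α} {k : α} (hC : SepStoK E S k C) :
    cStoK E S k ≤ C.card :=
  Nat.sInf_le ⟨C, hC, rfl⟩

theorem cKtoT_le_card {T C : Finset α} {k : α} (hC : SepKtoT E T k C) :
    cKtoT E T k ≤ C.card :=
  Nat.sInf_le ⟨C, hC, rfl⟩

end Paths

section Elimination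

variable {α : Type*} [DecidableEq α] {E : Finset (α × α)} {S T : Finset α} {a b k v : α}
  {l σ : List α}

@[simp]
theorem mem_inN : a ∈ inN E v ↔ (a, v) ∈ E := by
  simp [inN]

@[simp]
theorem mem_outN : b ∈ outN E v ↔ (v, b) ∈ E := by
  simp [outN]

theorem mem_elimv :
    (a, b) ∈ elimv E v ↔ ((a, b) ∈ E ∨ (a, v) ∈ E ∧ (v, b) ∈ E) ∧ a ≠ v ∧ b ≠ v := by
  simp [elimv]

theorem transGen_of_mem_elimv (h : (a, b) ∈ elimv E v) :
    TransGen (fun x y => (x, y) ∈ E) a b := by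
  rcases (mem_elimv.1 h).1 with hab | ⟨hav, hvb⟩
  · exact .single hab
  · exact .tail (.single hav) hvb

theorem Acyclic.elimv (hE : Acyclic E) (v : α) : Acyclic (elimv E v) := fun a ha =>
  hE a (TransGen.closed (fun _ _ => transGen_of_mem_elimv) a a ha)

theorem Acyclic.elimSeq (hE : Acyclic E) (σ : List α) : Acyclic (elimSeq E σ) := by
  induction σ generalizing E with
  | nil => exact hE
  | cons v σ ih => exact ih (hE.elimv v)

theorem IsPath.elimv_of_notMem (h : IsPath E a b l) (ha : a ≠ v) (hb : b ≠ v) (hv : v ∉ l) :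
    IsPath (elimv E v) a b l := by
  have hne : ∀ x ∈ a :: (l ++ [b]), x ≠ v := by
    rintro x hx rfl
    grind
  exact h.imp_of_mem_imp fun x y hx hy hxy => mem_elimv.2 ⟨.inl hxy, hne x hx, hne y hy⟩

theorem IsPath.elimv_append {l₁ l₂ : List α} (h₁ : IsPath E a v l₁) (h₂ : IsPath E v b l₂)
    (ha : a ≠ v) (hb : b ≠ v) (hv₁ : v ∉ l₁) (hv₂ : v ∉ l₂) :
    IsPath (elimv E v) a b (l₁ ++ l₂) := by
  induction l₁ generalizing a with
  | nil =>
    cases l₂ with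
    | nil => exact isPath_nil.2 (mem_elimv.2 ⟨.inr ⟨isPath_nil.1 h₁, isPath_nil.1 h₂⟩, ha, hb⟩)
    | cons x t =>
      obtain ⟨hvx, hxb⟩ := isPath_cons.1 h₂
      have hx : x ≠ v := fun hxv => hv₂ (hxv ▸ List.mem_cons_self)
      exact isPath_cons.2 ⟨mem_elimv.2 ⟨.inr ⟨isPath_nil.1 h₁, hvx⟩, ha, hx⟩,
        hxb.elimv_of_notMem hx hb fun hvt => hv₂ (List.mem_cons_of_mem x hvt)⟩
  | cons x t ih =>
    obtain ⟨hax, hxv⟩ := isPath_cons.1 h₁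
    have hx : x ≠ v := fun hxv => hv₁ (hxv ▸ List.mem_cons_self)
    exact isPath_cons.2 ⟨mem_elimv.2 ⟨.inl hax, ha, hx⟩,
      ih hxv hx fun hvt => hv₁ (List.mem_cons_of_mem x hvt)⟩

/-- In an acyclic graph `v` occurs at most once on a path, and the fill edge from its predecessor
to its successor bypasses it. -/
theorem IsPath.elimv_filter (hE : Acyclic E) (h : IsPath E a b l) (ha : a ≠ v) (hb : b ≠ v) :
    IsPath (elimv E v) a b (l.filter (· ≠ v)) := by
  by_cases hv : v ∈ l
  · obtain ⟨l₁, l₂, rfl⟩ := List.append_of_mem hv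
    obtain ⟨h₁, h₂⟩ := isPath_append_cons.1 h
    have hv₁ := hE.right_notMem_of_isPath h₁
    have hv₂ := hE.left_notMem_of_isPath h₂
    have hfilter : (l₁ ++ v :: l₂).filter (· ≠ v) = l₁ ++ l₂ := by
      rw [List.filter_append, List.filter_cons_of_neg (by simp), List.filter_eq_self.2,
        List.filter_eq_self.2] <;> rintro x hx <;> simpa using ne_of_mem_of_not_mem hx ‹_›
    rw [hfilter]
    exact h₁.elimv_append h₂ ha hb hv₁ hv₂
  · rw [List.filter_eq_self.2 fun x hx => by simpa using ne_of_mem_of_not_mem hx hv]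
    exact h.elimv_of_notMem ha hb hv

theorem IsPath.mem_elimSeq (hE : Acyclic E) (h : IsPath E a b l)
    (ha : a ∉ σ) (hb : b ∉ σ) (hl : ∀ x ∈ l, x ∈ σ) : (a, b) ∈ elimSeq E σ := by
  induction σ generalizing E l with
  | nil =>
    obtain rfl : l = [] := List.subset_nil.1 hl
    exact isPath_nil.1 h
  | cons v σ ih =>
    simp only [List.mem_cons, not_or] at ha hb hl
    refine ih (hE.elimv v) (h.elimv_filter hE ha.1 hb.1) ha.2 hb.2 fun x hx => ?_
    obtain ⟨hxl, hxv⟩ := List.mem_filter.1 hx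
    exact (hl x hxl).resolve_left (by simpa using hxv)

theorem sepStoK_inN_elimSeq (hE : Acyclic E) (hk : k ∉ σ) (hS : ∀ s ∈ S, s ∉ σ) :
    SepStoK E S k (inN (elimSeq E σ) k) := by
  refine ⟨fun h => (hE.elimSeq σ).irrefl k (mem_inN.1 h), fun s hs l h => ?_⟩
  by_cases hl : ∀ x ∈ l, x ∈ σ
  · exact .inl (mem_inN.2 (h.mem_elimSeq hE (hS s hs) hk hl))
  · obtain ⟨l₁, u, l₂, rfl, hu, hl₂⟩ := List.exists_split_at_last_of_not_forall hl
    exact .inr ⟨u, by simp, mem_inN.2 ((isPath_append_cons.1 h).2.mem_elimSeq hE hu hk hl₂)⟩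

theorem sepKtoT_outN_elimSeq (hE : Acyclic E) (hk : k ∉ σ) (hT : ∀ t ∈ T, t ∉ σ) :
    SepKtoT E T k (outN (elimSeq E σ) k) := by
  refine ⟨fun h => (hE.elimSeq σ).irrefl k (mem_outN.1 h), fun t ht l h => ?_⟩
  by_cases hl : ∀ x ∈ l, x ∈ σ
  · exact .inl (mem_outN.2 (h.mem_elimSeq hE hk (hT t ht) hl))
  · obtain ⟨l₁, u, l₂, rfl, hl₁, hu⟩ := List.exists_split_at_first_of_not_forall hl
    exact .inr ⟨u, by simp, mem_outN.2 ((isPath_append_cons.1 h).1.mem_elimSeq hE hk hu hl₁)⟩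

end Elimination

theorem markowitz_ge_separator_product_general (E : Finset (V × V)) (S I T : Finset V)
    (hD : IsDAGPartition E S I T) (k : V)
    (σ₁ σ₂ : List V) (hσ : (σ₁ ++ k :: σ₂).Nodup)
    (hσI : (σ₁ ++ k :: σ₂).toFinset = I) :
    cStoK E S k * cKtoT E T k ≤ mark (elimSeq E σ₁) k := by
  obtain ⟨hA, hSI, -, hIT, -, -, -⟩ := hD
  have hk : k ∉ σ₁ := fun h => (List.nodup_append.1 hσ).2.2 k h k List.mem_cons_self rfl
  have hσ₁I : ∀ x ∈ σ₁, x ∈ I := fun x hx =>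
    hσI ▸ List.mem_toFinset.2 (List.mem_append_left _ hx)
  exact Nat.mul_le_mul
    (cStoK_le_card (sepStoK_inN_elimSeq hA hk fun s hs hsσ =>
      Finset.disjoint_left.1 hSI hs (hσ₁I s hsσ)))
    (cKtoT_le_card (sepKtoT_outN_elimSeq hA hk fun t ht htσ =>
      Finset.disjoint_right.1 hIT ht (hσ₁I t htσ)))

/-- in every total elimination sequence, the cost paid when `k`
is eliminated is at least `c(S,k) · c(k,T)`. -/
theorem markowitz_ge_separator_product (E : Finset (V × V)) (S I T : Finset V)
    (hD : IsDAGPartition E S I T) (k : V) (hk : k ∈ I)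
    (σ₁ σ₂ : List V) (hσ : (σ₁ ++ k :: σ₂).Nodup)
    (hσI : (σ₁ ++ k :: σ₂).toFinset = I) :
    cStoK E S k * cKtoT E T k ≤ mark (elimSeq E σ₁) k :=
  markowitz_ge_separator_product_general E S I T hD k σ₁ σ₂ hσ hσI
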